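/- Residual of a transition and a coinitial braiding congruence: suppose E : P ⟶a R is a transition and φ : P ≅ P' is a braiding congruence. Then there exist a process R', a transition E/φ : P' ⟶a R' with the same action a, and a braiding congruence φ/E : R ≅ R', so that the square formed by E, φ, E/φ and φ/E commutes. -/

import Mathlib

/-- Contexts are natural numbers; names in context `Γ` are de Bruijn indices below `Γ`. -/
abbrev Name (Γ : ℕ) : Type := Fin Γ

/-- The renaming `push : Fin Γ → Fin (Γ+1)` sends `x` to `x+1`, freeing the index `0`. -/
def push {Γ : ℕ} (x : Name Γ) : Name (Γ + 1) := x.succ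

/-- For `y : Fin Γ`, the renaming `pop y : Fin (Γ+1) → Fin Γ` sends `0` to `y` and `x+1` to `x`. -/
def pop {Γ : ℕ} (y : Name Γ) : Name (Γ + 1) → Name Γ
  | ⟨0, _⟩ => y
  | ⟨x + 1, h⟩ => ⟨x, Nat.lt_of_succ_lt_succ h⟩

/-- The renaming `swap : Fin (Γ+2) → Fin (Γ+2)` sends `0` to `1`, `1` to `0` and `x+2` to itself. -/
def swap {Γ : ℕ} : Name (Γ + 2) → Name (Γ + 2)
  | ⟨0, _⟩ => ⟨1, by omega⟩
  | ⟨1, _⟩ => ⟨0, by omega⟩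
  | ⟨x + 2, h⟩ => ⟨x + 2, h⟩

/-- The lift `suc ρ : Fin (Γ+1) → Fin (Δ+1)` of a renaming `ρ : Fin Γ → Fin Δ` sends
`0` to `0` and `x+1` to `(ρ x)+1`. -/
def sucR {Γ Δ : ℕ} (ρ : Name Γ → Name Δ) : Name (Γ + 1) → Name (Δ + 1)
  | ⟨0, _⟩ => ⟨0, Nat.succ_pos Δ⟩
  | ⟨x + 1, h⟩ => (ρ ⟨x, Nat.lt_of_succ_lt_succ h⟩).succ

-- defeq tests
/-- Processes over the context `Γ`, in de Bruijn form. -/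
inductive Proc : ℕ → Type where
  /-- The inactive process `0`. -/
  | nil : {Γ : ℕ} → Proc Γ
  /-- Input prefix `x.P` (binding one name). -/
  | input : {Γ : ℕ} → Name Γ → Proc (Γ + 1) → Proc Γ
  /-- Output prefix `x⟨y⟩.P`. -/
  | output : {Γ : ℕ} → Name Γ → Name Γ → Proc Γ → Proc Γ
  /-- Choice `P + Q`. -/
  | choice : {Γ : ℕ} → Proc Γ → Proc Γ → Proc Γ
  /-- Parallel composition `P ∣ Q`. -/
  | par : {Γ : ℕ} → Proc Γ → Proc Γ → Proc Γ
  /-- Restriction `ν P` (binding one name). -/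
  | nu : {Γ : ℕ} → Proc (Γ + 1) → Proc Γ
  /-- Replication `!P`. -/
  | rep : {Γ : ℕ} → Proc Γ → Proc Γ

/-- The functorial extension of a renaming to processes, going under the binders of
input and restriction via the lift `sucR`. -/
def Proc.rename : {Γ Δ : ℕ} → (Name Γ → Name Δ) → Proc Γ → Proc Δ
  | _, _, _, .nil => .nil
  | _, _, ρ, .input x P => .input (ρ x) (P.rename (sucR ρ))
  | _, _, ρ, .output x y P => .output (ρ x) (ρ y) (P.rename ρ)
  | _, _, ρ, .choice P Q => .choice (P.rename ρ) (Q.rename ρ)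
  | _, _, ρ, .par P Q => .par (P.rename ρ) (Q.rename ρ)
  | _, _, ρ, .nu P => .nu (P.rename (sucR ρ))
  | _, _, ρ, .rep P => .rep (P.rename ρ)
/-- Actions are either *bound* (input and bound output, whose target context gains a
fresh name) or *non-bound* (output and silent, whose target context is unchanged). -/
inductive ActTy : Type where
  | bound : ActTy
  | nonbound : ActTy

/-- The target context of an action of the given kind performed in context `Γ`. -/
@[reducible] def ActTy.tgt : ActTy → ℕ → ℕ
  | .bound, Γ => Γ + 1
  | .nonbound, Γ => Γ

/-- Actions over the context `Γ`. -/
inductive Act : ActTy → ℕ → Type where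
  /-- Input `x`. -/
  | inp : {Γ : ℕ} → Name Γ → Act .bound Γ
  /-- Bound output `x⟨ν⟩` (output of a name whose scope is being extruded). -/
  | bout : {Γ : ℕ} → Name Γ → Act .bound Γ
  /-- Output `x⟨y⟩`. -/
  | out : {Γ : ℕ} → Name Γ → Name Γ → Act .nonbound Γ
  /-- Silent action `τ`. -/
  | tau : {Γ : ℕ} → Act .nonbound Γ

/-- The extension of a renaming to actions. -/
def Act.rename {Γ Δ : ℕ} (ρ : Name Γ → Name Δ) : {ty : ActTy} → Act ty Γ → Act ty Δ
  | _, .inp x => .inp (ρ x)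
  | _, .bout x => .bout (ρ x)
  | _, .out x y => .out (ρ x) (ρ y)
  | _, .tau => .tau

/-- The residual `ρ/a` of a renaming `ρ` after an action of kind `ty`:
`suc ρ` if the action is bound and `ρ` itself otherwise. -/
def resRen : (ty : ActTy) → {Γ Δ : ℕ} → (Name Γ → Name Δ) → Name (ty.tgt Γ) → Name (ty.tgt Δ)
  | .bound, _, _, ρ => sucR ρ
  | .nonbound, _, _, ρ => ρ
/-- The labelled transition relation, in proof-relevant form: an element of
`Tr P a R` is a derivation (a "proved transition") of `P ⟶a R`. -/
inductive Tr : {Γ : ℕ} → {ty : ActTy} → Proc Γ → Act ty Γ → Proc (ActTy.tgt ty Γ) → Type where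
  /-- `x.P  ⟶x  P`. -/
  | inp : {Γ : ℕ} → (x : Name Γ) → (P : Proc (Γ + 1)) →
      Tr (.input x P) (.inp x) P
  /-- `x⟨y⟩.P  ⟶x⟨y⟩  P`. -/
  | out : {Γ : ℕ} → (x y : Name Γ) → (P : Proc Γ) →
      Tr (.output x y P) (.out x y) P
  /-- Choose the left branch. -/
  | sumL : {Γ : ℕ} → {ty : ActTy} → {P : Proc Γ} → (Q : Proc Γ) → {a : Act ty Γ} →
      {R : Proc (ActTy.tgt ty Γ)} → Tr P a R → Tr (.choice P Q) a R
  /-- Choose the right branch. -/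
  | sumR : {Γ : ℕ} → {ty : ActTy} → (P : Proc Γ) → {Q : Proc Γ} → {a : Act ty Γ} →
      {R : Proc (ActTy.tgt ty Γ)} → Tr Q a R → Tr (.choice P Q) a R
  /-- Propagate a non-bound action through a parallel composition on the left. -/
  | parLC : {Γ : ℕ} → {P : Proc Γ} → (Q : Proc Γ) → {c : Act .nonbound Γ} → {R : Proc Γ} →
      Tr P c R → Tr (.par P Q) c (.par R Q)
  /-- Propagate a bound action through a parallel composition on the left,
  reserving the fresh name `0` in the passive component via `push`. -/
  | parLB : {Γ : ℕ} → {P : Proc Γ} → (Q : Proc Γ) → {b : Act .bound Γ} → {R : Proc (Γ + 1)} →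
      Tr P b R → Tr (.par P Q) b (.par R (Q.rename push))
  /-- Propagate a non-bound action through a parallel composition on the right. -/
  | parRC : {Γ : ℕ} → (P : Proc Γ) → {Q : Proc Γ} → {c : Act .nonbound Γ} → {S : Proc Γ} →
      Tr Q c S → Tr (.par P Q) c (.par P S)
  /-- Propagate a bound action through a parallel composition on the right. -/
  | parRB : {Γ : ℕ} → (P : Proc Γ) → {Q : Proc Γ} → {b : Act .bound Γ} → {S : Proc (Γ + 1)} →
      Tr Q b S → Tr (.par P Q) b (.par (P.rename push) S)
  /-- Communication rendezvous, receiving `y` on the left. -/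
  | comL : {Γ : ℕ} → {P Q : Proc Γ} → {x y : Name Γ} → {R : Proc (Γ + 1)} → {S : Proc Γ} →
      Tr P (.inp x) R → Tr Q (.out x y) S →
      Tr (.par P Q) .tau (.par (R.rename (pop y)) S)
  /-- Communication rendezvous, receiving `y` on the right. -/
  | comR : {Γ : ℕ} → {P Q : Proc Γ} → {x y : Name Γ} → {R : Proc Γ} → {S : Proc (Γ + 1)} →
      Tr P (.out x y) R → Tr Q (.inp x) S →
      Tr (.par P Q) .tau (.par R (S.rename (pop y)))
  /-- Initiate extrusion of the scope of a `ν`-binder: an output `(x+1)⟨0⟩` under the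
  binder becomes a bound output `x⟨ν⟩`. -/
  | extrude : {Γ : ℕ} → {P : Proc (Γ + 1)} → {x : Name Γ} → {R : Proc (Γ + 1)} →
      Tr P (.out (push x) 0) R → Tr (.nu P) (.bout x) R
  /-- Extrusion rendezvous ("close"), receiving the extruded name `0` on the left. -/
  | closeL : {Γ : ℕ} → {P Q : Proc Γ} → {x : Name Γ} → {R S : Proc (Γ + 1)} →
      Tr P (.inp x) R → Tr Q (.bout x) S →
      Tr (.par P Q) .tau (.nu (.par R S))
  /-- Extrusion rendezvous ("close"), receiving the extruded name `0` on the right. -/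
  | closeR : {Γ : ℕ} → {P Q : Proc Γ} → {x : Name Γ} → {R S : Proc (Γ + 1)} →
      Tr P (.bout x) R → Tr Q (.inp x) S →
      Tr (.par P Q) .tau (.nu (.par R S))
  /-- Propagate a non-bound action of the form `push* c` through a `ν`-binder. -/
  | nuC : {Γ : ℕ} → {P : Proc (Γ + 1)} → {c : Act .nonbound Γ} → {R : Proc (Γ + 1)} →
      Tr P (c.rename push) R → Tr (.nu P) c (.nu R)
  /-- Propagate a bound action of the form `push* b` through a `ν`-binder,
  rewiring the target with the braid `swap`. -/
  | nuB : {Γ : ℕ} → {P : Proc (Γ + 1)} → {b : Act .bound Γ} → {R : Proc (Γ + 2)} →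
      Tr P (b.rename push) R → Tr (.nu P) b (.nu (R.rename swap))
  /-- Replication. -/
  | rep : {Γ : ℕ} → {ty : ActTy} → {P : Proc Γ} → {a : Act ty Γ} → {R : Proc (ActTy.tgt ty Γ)} →
      Tr (.par P (.rep P)) a R → Tr (.rep P) a R
/-- Braiding congruence `P ≅ Q`: the congruence on processes generated by the braidings
`ν ν (swap* P) ≅ ν ν P` and `ν ν P ≅ ν ν (swap* P)`, transitivity, and closure under
all process constructors. -/
inductive BC : {Γ : ℕ} → Proc Γ → Proc Γ → Type where
  /-- `ν ν (swap* P) ≅ ν ν P`. -/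
  | nuSwap : {Γ : ℕ} → (P : Proc (Γ + 2)) → BC (.nu (.nu (P.rename swap))) (.nu (.nu P))
  /-- `ν ν P ≅ ν ν (swap* P)`. -/
  | nuSwapInv : {Γ : ℕ} → (P : Proc (Γ + 2)) → BC (.nu (.nu P)) (.nu (.nu (P.rename swap)))
  /-- Transitivity. -/
  | trans : {Γ : ℕ} → {P R S : Proc Γ} → BC P R → BC R S → BC P S
  /-- `0 ≅ 0`. -/
  | nil : {Γ : ℕ} → BC (Proc.nil : Proc Γ) .nil
  /-- Compatibility with input prefix. -/
  | input : {Γ : ℕ} → (x : Name Γ) → {P R : Proc (Γ + 1)} → BC P R →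
      BC (.input x P) (.input x R)
  /-- Compatibility with output prefix. -/
  | output : {Γ : ℕ} → (x y : Name Γ) → {P R : Proc Γ} → BC P R →
      BC (.output x y P) (.output x y R)
  /-- Compatibility with choice. -/
  | choice : {Γ : ℕ} → {P R Q S : Proc Γ} → BC P R → BC Q S →
      BC (.choice P Q) (.choice R S)
  /-- Compatibility with parallel composition. -/
  | par : {Γ : ℕ} → {P R Q S : Proc Γ} → BC P R → BC Q S →
      BC (.par P Q) (.par R S)
  /-- Compatibility with restriction. -/
  | nu : {Γ : ℕ} → {P R : Proc (Γ + 1)} → BC P R → BC (.nu P) (.nu R)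
  /-- Compatibility with replication. -/
  | rep : {Γ : ℕ} → {P R : Proc Γ} → BC P R → BC (.rep P) (.rep R)

/-!
Residuals are first built for a single step of the congruence without transitivity, by
induction on the transition. Congruence rules commute with the transition rules, using that
renamings act on both transitions and braidings. The only real case is a transition out of
`ν ν (swap* Q)`: it is matched by the same rules applied to `ν ν Q` with the roles of the two
binders exchanged, and when both binders pass a bound action the two targets differ by a braid
because of the Yang–Baxter equation for `swap` on three names. `BC` is the reflexive–transitive
closure of these steps, and residuals compose along the chain.
-/

theorem swap_swap {Γ : ℕ} (x : Name (Γ + 2)) : swap (swap x) = x := by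
  rcases x with ⟨_ | _ | _, _⟩ <;> rfl

theorem sucR_push {Γ Δ : ℕ} (ρ : Name Γ → Name Δ) (x : Name Γ) :
    sucR ρ (push x) = push (ρ x) := rfl

theorem sucR_id {Γ : ℕ} : sucR (id : Name Γ → Name Γ) = id := by
  funext x
  rcases x with ⟨_ | _, _⟩ <;> rfl

theorem sucR_comp {Γ Δ Θ : ℕ} (σ : Name Δ → Name Θ) (ρ : Name Γ → Name Δ) :
    sucR σ ∘ sucR ρ = sucR (σ ∘ ρ) := by
  funext x
  rcases x with ⟨_ | _, _⟩ <;> rfl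

theorem pop_sucR {Γ Δ : ℕ} (ρ : Name Γ → Name Δ) (y : Name Γ) (x : Name (Γ + 1)) :
    pop (ρ y) (sucR ρ x) = ρ (pop y x) := by
  rcases x with ⟨_ | _, _⟩ <;> rfl

theorem swap_sucR_sucR {Γ Δ : ℕ} (ρ : Name Γ → Name Δ) (x : Name (Γ + 2)) :
    swap (sucR (sucR ρ) x) = sucR (sucR ρ) (swap x) := by
  rcases x with ⟨_ | _ | _, _⟩ <;> rfl

theorem swap_braid {Γ : ℕ} (x : Name (Γ + 3)) :
    swap (sucR swap (swap x)) = sucR swap (swap (sucR swap x)) := by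
  rcases x with ⟨_ | _ | _ | _, _⟩ <;> rfl

namespace Proc

theorem rename_rename {Γ Δ Θ : ℕ} (σ : Name Δ → Name Θ) (ρ : Name Γ → Name Δ)
    (P : Proc Γ) : (P.rename ρ).rename σ = P.rename (σ ∘ ρ) := by
  induction P generalizing Δ Θ <;> simp only [rename, sucR_comp, Function.comp_apply, *]

theorem rename_id {Γ : ℕ} (P : Proc Γ) : P.rename id = P := by
  induction P <;> simp only [rename, sucR_id, id, *]

theorem rename_rename_comm {Γ Δ Δ' Θ : ℕ} {ρ : Name Γ → Name Δ} {σ : Name Δ → Name Θ}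
    {ρ' : Name Γ → Name Δ'} {σ' : Name Δ' → Name Θ} (h : ∀ x, σ (ρ x) = σ' (ρ' x)) (P : Proc Γ) :
    (P.rename ρ).rename σ = (P.rename ρ').rename σ' := by
  rw [rename_rename, rename_rename]
  exact congrArg (P.rename ·) (funext h)

theorem rename_swap_swap {Γ : ℕ} (P : Proc (Γ + 2)) : (P.rename swap).rename swap = P := by
  rw [rename_rename, show swap ∘ swap = (id : Name (Γ + 2) → _) from funext swap_swap]
  exact rename_id P

theorem rename_push_sucR {Γ Δ : ℕ} (ρ : Name Γ → Name Δ) (P : Proc Γ) :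
    (P.rename push).rename (sucR ρ) = (P.rename ρ).rename push :=
  rename_rename_comm (sucR_push ρ) P

end Proc

theorem Act.rename_push_sucR {Γ Δ : ℕ} {ty : ActTy} (ρ : Name Γ → Name Δ) (a : Act ty Γ) :
    (a.rename push).rename (sucR ρ) = (a.rename ρ).rename push := by
  cases a <;> rfl

theorem Act.rename_push_push_swap {Γ : ℕ} {ty : ActTy} (a : Act ty Γ) :
    ((a.rename push).rename push).rename swap = (a.rename push).rename push := by
  cases a <;> rfl

def Tr.rename {Γ Δ : ℕ} {ty : ActTy} (ρ : Name Γ → Name Δ) {P : Proc Γ} {a : Act ty Γ}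
    {R : Proc (ActTy.tgt ty Γ)} : Tr P a R →
    Tr (P.rename ρ) (a.rename ρ) (R.rename (resRen ty ρ))
  | .inp x P => .inp (ρ x) (P.rename (sucR ρ))
  | .out x y P => .out (ρ x) (ρ y) (P.rename ρ)
  | .sumL Q E => .sumL (Q.rename ρ) (E.rename ρ)
  | .sumR P E => .sumR (P.rename ρ) (E.rename ρ)
  | .parLC Q E => .parLC (Q.rename ρ) (E.rename ρ)
  | .parRC P E => .parRC (P.rename ρ) (E.rename ρ)
  | .parLB Q E => by
    simp only [Proc.rename, resRen, Proc.rename_push_sucR]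
    exact .parLB (Q.rename ρ) (E.rename ρ)
  | .parRB P E => by
    simp only [Proc.rename, resRen, Proc.rename_push_sucR]
    exact .parRB (P.rename ρ) (E.rename ρ)
  | .comL (y := y) (R := R) E F => by
    simp only [Proc.rename, resRen, Act.rename, ← Proc.rename_rename_comm (pop_sucR ρ y) R]
    exact .comL (E.rename ρ) (F.rename ρ)
  | .comR (y := y) (S := S) E F => by
    simp only [Proc.rename, resRen, Act.rename, ← Proc.rename_rename_comm (pop_sucR ρ y) S]
    exact .comR (E.rename ρ) (F.rename ρ)
  | .extrude E => .extrude (E.rename (sucR ρ))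
  | .closeL E F => .closeL (E.rename ρ) (F.rename ρ)
  | .closeR E F => .closeR (E.rename ρ) (F.rename ρ)
  | .nuC (c := c) E => .nuC (Act.rename_push_sucR ρ c ▸ E.rename (sucR ρ))
  | .nuB (b := b) (R := R) E => by
    simp only [Proc.rename, resRen, ← Proc.rename_rename_comm (swap_sucR_sucR ρ) R]
    exact .nuB (Act.rename_push_sucR ρ b ▸ E.rename (sucR ρ))
  | .rep E => .rep (E.rename ρ)

def Tr.unswap {Γ : ℕ} {ty : ActTy} {Q : Proc (Γ + 2)} {a : Act ty (Γ + 2)}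
    {R : Proc (ActTy.tgt ty (Γ + 2))} (E : Tr (Q.rename swap) a R) :
    Tr Q (a.rename swap) (R.rename (resRen ty swap)) :=
  Q.rename_swap_swap ▸ E.rename swap

/-- `BC` without its transitivity rule, which makes it invertible along the last rule of a
transition. -/
inductive BCStep : {Γ : ℕ} → Proc Γ → Proc Γ → Prop where
  | nuSwap {Γ : ℕ} (P : Proc (Γ + 2)) : BCStep (.nu (.nu (P.rename swap))) (.nu (.nu P))
  | nuSwapInv {Γ : ℕ} (P : Proc (Γ + 2)) : BCStep (.nu (.nu P)) (.nu (.nu (P.rename swap)))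
  | nil {Γ : ℕ} : BCStep (Proc.nil : Proc Γ) .nil
  | input {Γ : ℕ} (x : Name Γ) {P R : Proc (Γ + 1)} : BCStep P R →
      BCStep (.input x P) (.input x R)
  | output {Γ : ℕ} (x y : Name Γ) {P R : Proc Γ} : BCStep P R →
      BCStep (.output x y P) (.output x y R)
  | choice {Γ : ℕ} {P R Q S : Proc Γ} : BCStep P R → BCStep Q S →
      BCStep (.choice P Q) (.choice R S)
  | par {Γ : ℕ} {P R Q S : Proc Γ} : BCStep P R → BCStep Q S → BCStep (.par P Q) (.par R S)
  | nu {Γ : ℕ} {P R : Proc (Γ + 1)} : BCStep P R → BCStep (.nu P) (.nu R)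
  | rep {Γ : ℕ} {P R : Proc Γ} : BCStep P R → BCStep (.rep P) (.rep R)

namespace BCStep

theorem refl {Γ : ℕ} : (P : Proc Γ) → BCStep P P
  | .nil => .nil
  | .input x P => .input x (refl P)
  | .output x y P => .output x y (refl P)
  | .choice P Q => .choice (refl P) (refl Q)
  | .par P Q => .par (refl P) (refl Q)
  | .nu P => .nu (refl P)
  | .rep P => .rep (refl P)

theorem rename {Γ Δ : ℕ} (ρ : Name Γ → Name Δ) {P Q : Proc Γ} (φ : BCStep P Q) :
    BCStep (P.rename ρ) (Q.rename ρ) := by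
  induction φ generalizing Δ with
  | nuSwap P =>
    simp only [Proc.rename, ← Proc.rename_rename_comm (swap_sucR_sucR ρ) P]
    exact .nuSwap _
  | nuSwapInv P =>
    simp only [Proc.rename, ← Proc.rename_rename_comm (swap_sucR_sucR ρ) P]
    exact .nuSwapInv _
  | nil => exact .nil
  | input x _ ih => exact .input _ (ih (sucR ρ))
  | output x y _ ih => exact .output _ _ (ih ρ)
  | choice _ _ ih ih' => exact .choice (ih ρ) (ih' ρ)
  | par _ _ ih ih' => exact .par (ih ρ) (ih' ρ)
  | nu _ ih => exact .nu (ih (sucR ρ))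
  | rep _ ih => exact .rep (ih ρ)

theorem nonempty_bc {Γ : ℕ} {P Q : Proc Γ} (φ : BCStep P Q) : Nonempty (BC P Q) := by
  induction φ with
  | nuSwap P => exact ⟨.nuSwap P⟩
  | nuSwapInv P => exact ⟨.nuSwapInv P⟩
  | nil => exact ⟨.nil⟩
  | input x _ ih => exact ⟨.input x ih.some⟩
  | output x y _ ih => exact ⟨.output x y ih.some⟩
  | choice _ _ ih ih' => exact ⟨.choice ih.some ih'.some⟩
  | par _ _ ih ih' => exact ⟨.par ih.some ih'.some⟩
  | nu _ ih => exact ⟨.nu ih.some⟩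
  | rep _ ih => exact ⟨.rep ih.some⟩

end BCStep

def BC.refl {Γ : ℕ} : (P : Proc Γ) → BC P P
  | .nil => .nil
  | .input x P => .input x (refl P)
  | .output x y P => .output x y (refl P)
  | .choice P Q => .choice (refl P) (refl Q)
  | .par P Q => .par (refl P) (refl Q)
  | .nu P => .nu (refl P)
  | .rep P => .rep (refl P)

open Relation in
theorem BC.reflTransGen {Γ : ℕ} {P Q : Proc Γ} (φ : BC P Q) : ReflTransGen BCStep P Q := by
  induction φ with
  | nuSwap P => exact .single (.nuSwap P)
  | nuSwapInv P => exact .single (.nuSwapInv P)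
  | trans _ _ ih ih' => exact ih.trans ih'
  | nil => exact .refl
  | input x _ ih => exact ih.lift _ fun _ _ h => .input x h
  | output x y _ ih => exact ih.lift _ fun _ _ h => .output x y h
  | @choice _ P R Q S _ _ ih ih' =>
    exact (ih.lift (p := BCStep) (·.choice Q) fun _ _ h => .choice h (.refl Q)).trans
      (ih'.lift (p := BCStep) (R.choice ·) fun _ _ h => .choice (.refl R) h)
  | @par _ P R Q S _ _ ih ih' =>
    exact (ih.lift (p := BCStep) (·.par Q) fun _ _ h => .par h (.refl Q)).trans
      (ih'.lift (p := BCStep) (R.par ·) fun _ _ h => .par (.refl R) h)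
  | nu _ ih => exact ih.lift _ fun _ _ h => .nu h
  | rep _ ih => exact ih.lift _ fun _ _ h => .rep h

open Relation in
theorem nonempty_bc_iff_reflTransGen {Γ : ℕ} {P Q : Proc Γ} :
    Nonempty (BC P Q) ↔ ReflTransGen BCStep P Q := by
  refine ⟨fun ⟨φ⟩ => φ.reflTransGen, fun h => ?_⟩
  induction h with
  | refl => exact ⟨BC.refl _⟩
  | tail _ step ih => exact ⟨.trans ih.some (step.nonempty_bc).some⟩

theorem BCStep.nu_nu_braid {Γ : ℕ} (R : Proc (Γ + 3)) :
    BCStep (.nu (.nu ((R.rename swap).rename (sucR swap))))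
      (.nu (.nu (((R.rename (sucR swap)).rename swap).rename (sucR swap)))) := by
  have h : (R.rename swap).rename (sucR swap) =
      ((((R.rename (sucR swap)).rename swap).rename (sucR swap))).rename swap := by
    simp only [Proc.rename_rename]
    refine congrArg (Proc.rename · R) (funext fun x => ?_)
    simp only [Function.comp_apply, ← swap_braid, swap_swap]
  exact h ▸ .nuSwap _

theorem Tr.residual_nuSwap {Γ : ℕ} {ty : ActTy} {Q : Proc (Γ + 2)} {a : Act ty Γ}
    {R : Proc (ActTy.tgt ty Γ)} :
    Tr (.nu (.nu (Q.rename swap))) a R → ∃ R', Nonempty (Tr (.nu (.nu Q)) a R') ∧ BCStep R R'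
  | .extrude (.nuC (R := R₀) E) =>
    ⟨_, ⟨R₀.rename_swap_swap ▸ .nuB (.extrude E.unswap)⟩, .refl _⟩
  | .nuC (c := c) (.nuC (R := R₀) E) =>
    ⟨_, ⟨.nuC (.nuC (c.rename_push_push_swap ▸ E.unswap))⟩, .nuSwapInv R₀⟩
  | .nuB (b := .inp _) (.nuB (R := R₂) E) | .nuB (b := .bout _) (.nuB (R := R₂) E) =>
    ⟨_, ⟨.nuB (.nuB (Act.rename_push_push_swap _ ▸ E.unswap))⟩, by
      simpa only [Proc.rename, resRen] using BCStep.nu_nu_braid R₂⟩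
  | .nuB (b := .bout x) (.extrude (x := .(push x)) E) =>
    ⟨_, ⟨.extrude (.nuC E.unswap)⟩, .refl _⟩

theorem Tr.residual_nuSwapInv {Γ : ℕ} {ty : ActTy} {Q : Proc (Γ + 2)} {a : Act ty Γ}
    {R : Proc (ActTy.tgt ty Γ)} (E : Tr (.nu (.nu Q)) a R) :
    ∃ R', Nonempty (Tr (.nu (.nu (Q.rename swap))) a R') ∧ BCStep R R' :=
  residual_nuSwap (Q := Q.rename swap) (by rwa [Q.rename_swap_swap])

theorem Tr.residual_bcStep {Γ : ℕ} {ty : ActTy} {P P' : Proc Γ} {a : Act ty Γ}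
    {R : Proc (ActTy.tgt ty Γ)} : Tr P a R → BCStep P P' →
    ∃ R', Nonempty (Tr P' a R') ∧ BCStep R R'
  | E, .nuSwap _ => E.residual_nuSwap
  | E, .nuSwapInv _ => E.residual_nuSwapInv
  | .inp x _, .input _ φ => ⟨_, ⟨.inp x _⟩, φ⟩
  | .out x y _, .output _ _ φ => ⟨_, ⟨.out x y _⟩, φ⟩
  | .sumL _ E, .choice φ _ =>
    have ⟨_, ⟨E'⟩, χ⟩ := E.residual_bcStep φ
    ⟨_, ⟨.sumL _ E'⟩, χ⟩
  | .sumR _ E, .choice _ φ =>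
    have ⟨_, ⟨E'⟩, χ⟩ := E.residual_bcStep φ
    ⟨_, ⟨.sumR _ E'⟩, χ⟩
  | .parLC _ E, .par φ ψ =>
    have ⟨_, ⟨E'⟩, χ⟩ := E.residual_bcStep φ
    ⟨_, ⟨.parLC _ E'⟩, .par χ ψ⟩
  | .parLB _ E, .par φ ψ =>
    have ⟨_, ⟨E'⟩, χ⟩ := E.residual_bcStep φ
    ⟨_, ⟨.parLB _ E'⟩, .par χ (ψ.rename push)⟩
  | .parRC _ E, .par φ ψ =>
    have ⟨_, ⟨E'⟩, χ⟩ := E.residual_bcStep ψ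
    ⟨_, ⟨.parRC _ E'⟩, .par φ χ⟩
  | .parRB _ E, .par φ ψ =>
    have ⟨_, ⟨E'⟩, χ⟩ := E.residual_bcStep ψ
    ⟨_, ⟨.parRB _ E'⟩, .par (φ.rename push) χ⟩
  | .comL E F, .par φ ψ =>
    have ⟨_, ⟨E'⟩, χ⟩ := E.residual_bcStep φ
    have ⟨_, ⟨F'⟩, χ'⟩ := F.residual_bcStep ψ
    ⟨_, ⟨.comL E' F'⟩, .par (χ.rename _) χ'⟩
  | .comR E F, .par φ ψ =>
    have ⟨_, ⟨E'⟩, χ⟩ := E.residual_bcStep φ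
    have ⟨_, ⟨F'⟩, χ'⟩ := F.residual_bcStep ψ
    ⟨_, ⟨.comR E' F'⟩, .par χ (χ'.rename _)⟩
  | .closeL E F, .par φ ψ =>
    have ⟨_, ⟨E'⟩, χ⟩ := E.residual_bcStep φ
    have ⟨_, ⟨F'⟩, χ'⟩ := F.residual_bcStep ψ
    ⟨_, ⟨.closeL E' F'⟩, .nu (.par χ χ')⟩
  | .closeR E F, .par φ ψ =>
    have ⟨_, ⟨E'⟩, χ⟩ := E.residual_bcStep φ
    have ⟨_, ⟨F'⟩, χ'⟩ := F.residual_bcStep ψ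
    ⟨_, ⟨.closeR E' F'⟩, .nu (.par χ χ')⟩
  | .extrude E, .nu φ =>
    have ⟨_, ⟨E'⟩, χ⟩ := E.residual_bcStep φ
    ⟨_, ⟨.extrude E'⟩, χ⟩
  | .nuC E, .nu φ =>
    have ⟨_, ⟨E'⟩, χ⟩ := E.residual_bcStep φ
    ⟨_, ⟨.nuC E'⟩, .nu χ⟩
  | .nuB E, .nu φ =>
    have ⟨_, ⟨E'⟩, χ⟩ := E.residual_bcStep φ
    ⟨_, ⟨.nuB E'⟩, .nu (χ.rename swap)⟩
  | .rep E, .rep φ =>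
    have ⟨_, ⟨E'⟩, χ⟩ := E.residual_bcStep (.par φ (.rep φ))
    ⟨_, ⟨.rep E'⟩, χ⟩

open Relation in
theorem Tr.residual_reflTransGen {Γ : ℕ} {ty : ActTy} {P P' : Proc Γ} {a : Act ty Γ}
    {R : Proc (ActTy.tgt ty Γ)} (E : Tr P a R) (h : ReflTransGen BCStep P P') :
    ∃ R', Nonempty (Tr P' a R') ∧ ReflTransGen BCStep R R' := by
  induction h with
  | refl => exact ⟨R, ⟨E⟩, .refl⟩
  | tail _ φ ih =>
    obtain ⟨R₁, ⟨E₁⟩, h₁⟩ := ih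
    obtain ⟨R', ⟨E'⟩, χ⟩ := E₁.residual_bcStep φ
    exact ⟨R', ⟨E'⟩, h₁.tail χ⟩

/-- Residual of a transition and a coinitial braiding congruence: given `E : P ⟶a R`
and `φ : P ≅ P'`, there exist a process `R'`, a transition `E/φ : P' ⟶a R'` with the
same action `a`, and a braiding congruence `φ/E : R ≅ R'` (so that the square formed by
`E`, `φ`, `E/φ` and `φ/E` commutes). -/
theorem Tr.residual_bc {Γ : ℕ} {ty : ActTy} {P : Proc Γ} {a : Act ty Γ}
    {R : Proc (ActTy.tgt ty Γ)} {P' : Proc Γ} (E : Tr P a R) (φ : BC P P') :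
    ∃ R' : Proc (ActTy.tgt ty Γ), Nonempty (Tr P' a R') ∧ Nonempty (BC R R') := by
  obtain ⟨R', E', h⟩ := E.residual_reflTransGen φ.reflTransGen
  exact ⟨R', E', nonempty_bc_iff_reflTransGen.mpr h⟩
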